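/- arXiv:1212.6750 — 4 statements merged into one kernel-verified Lean document; each statement's English description precedes it below -/
import Mathlib

section
/- Let B, E₁, E₂, A₁, A₂ be C*-algebras and suppose given, for i = 1, 2, an injective ⋆-homomorphism ιᵢ : B → Eᵢ and a surjective ⋆-homomorphism πᵢ : Eᵢ → Aᵢ with range ιᵢ = ker πᵢ (i.e. 0 → B → Eᵢ → Aᵢ → 0 is an extension of C*-algebras), together with ⋆-homomorphisms φ₁ : E₁ → E₂ and φ₂ : A₁ → A₂ satisfying φ₁ ∘ ι₁ = ι₂ and π₂ ∘ φ₁ = φ₂ ∘ π₁ (so the map on the ideal B is the identity). If the range of φ₂ is a hereditary subset of A₂, i.e. whenever x ∈ range φ₂ and y ∈ A₂ satisfy 0 ≤ y ≤ x then y ∈ range φ₂, then the range of φ₁ is a hereditary subset of E₂. -/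
/-- Given two extensions `0 → B → Eᵢ → Aᵢ → 0` of C*-algebras (`i = 1, 2`) and a
commutative diagram with `⋆`-homomorphisms `φ₁ : E₁ → E₂`, `φ₂ : A₁ → A₂` which is the
identity on the ideal `B`: if the range of `φ₂` is a hereditary subset of `A₂`, then the
range of `φ₁` is a hereditary subset of `E₂`. -/
theorem range_hereditary_of_extension_diagram
    {B E₁ E₂ A₁ A₂ : Type*}
    [NonUnitalCStarAlgebra B] [NonUnitalCStarAlgebra E₁] [NonUnitalCStarAlgebra E₂]
    [NonUnitalCStarAlgebra A₁] [NonUnitalCStarAlgebra A₂]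
    [PartialOrder E₂] [StarOrderedRing E₂] [PartialOrder A₂] [StarOrderedRing A₂]
    (ι₁ : B →⋆ₙₐ[ℂ] E₁) (ι₂ : B →⋆ₙₐ[ℂ] E₂)
    (π₁ : E₁ →⋆ₙₐ[ℂ] A₁) (π₂ : E₂ →⋆ₙₐ[ℂ] A₂)
    (hι₁ : Function.Injective ι₁) (hι₂ : Function.Injective ι₂)
    (hπ₁ : Function.Surjective π₁) (hπ₂ : Function.Surjective π₂)
    (hexact₁ : Set.range ι₁ = {x : E₁ | π₁ x = 0})
    (hexact₂ : Set.range ι₂ = {x : E₂ | π₂ x = 0})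
    (φ₁ : E₁ →⋆ₙₐ[ℂ] E₂) (φ₂ : A₁ →⋆ₙₐ[ℂ] A₂)
    (hcomm_ideal : ∀ b : B, φ₁ (ι₁ b) = ι₂ b)
    (hcomm_quot : ∀ x : E₁, π₂ (φ₁ x) = φ₂ (π₁ x))
    (h_her : ∀ x ∈ Set.range φ₂, ∀ y : A₂, 0 ≤ y → y ≤ x → y ∈ Set.range φ₂) :
    ∀ x ∈ Set.range φ₁, ∀ y : E₂, 0 ≤ y → y ≤ x → y ∈ Set.range φ₁ := by
  rintro x ⟨e, rfl⟩ y hy0 hyx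
  -- π₂ is monotone, so π₂ y is between 0 and π₂ (φ₁ e) = φ₂ (π₁ e)
  have h1 : (0 : A₂) ≤ π₂ y := by simpa using OrderHomClass.mono π₂ hy0
  have h2 : π₂ y ≤ φ₂ (π₁ e) := by
    have := OrderHomClass.mono π₂ hyx
    rwa [hcomm_quot] at this
  obtain ⟨a, ha⟩ := h_her _ ⟨π₁ e, rfl⟩ _ h1 h2
  obtain ⟨e₁, rfl⟩ := hπ₁ a
  have hk : y - φ₁ e₁ ∈ Set.range ι₂ := by
    rw [hexact₂]
    simp only [Set.mem_setOf_eq, map_sub, hcomm_quot, ha, sub_self]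
  obtain ⟨b, hb⟩ := hk
  exact ⟨e₁ + ι₁ b, by rw [map_add, hcomm_ideal, hb, add_sub_cancel]⟩
end

section
/- Let B, E₁, E₂, A₁, A₂ be C*-algebras and suppose given, for i = 1, 2, an injective ⋆-homomorphism ιᵢ : B → Eᵢ and a surjective ⋆-homomorphism πᵢ : Eᵢ → Aᵢ with range ιᵢ = ker πᵢ (i.e. 0 → B → Eᵢ → Aᵢ → 0 is an extension of C*-algebras), together with ⋆-homomorphisms φ₁ : E₁ → E₂ and φ₂ : A₁ → A₂ satisfying φ₁ ∘ ι₁ = ι₂ and π₂ ∘ φ₁ = φ₂ ∘ π₁ (so the map on the ideal B is the identity). If the range of φ₂ is full in A₂, i.e. the smallest closed two-sided ideal of A₂ containing range φ₂ is A₂ itself, then the range of φ₁ is full in E₂, i.e. the smallest closed two-sided ideal of E₂ containing range φ₁ is E₂ itself. -/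
/-- A subset `S` of a C*-algebra `A` is *full* if the smallest closed two-sided ideal of `A`
containing `S` is `A` itself, i.e. every closed two-sided ideal containing `S` is all of `A`. -/
def IsFullSubset {A : Type*} [NonUnitalCStarAlgebra A] (S : Set A) : Prop :=
  ∀ I : TwoSidedIdeal A, IsClosed (I : Set A) → S ⊆ (I : Set A) → I = ⊤

open scoped CStarAlgebra

/-- Given two extensions `0 → B → Eᵢ → Aᵢ → 0` of C*-algebras (`i = 1, 2`) and a
commutative diagram with `⋆`-homomorphisms `φ₁ : E₁ → E₂`, `φ₂ : A₁ → A₂` which is the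
identity on the ideal `B`: if the range of `φ₂` is full in `A₂`, then the range of `φ₁`
is full in `E₂`. -/
theorem range_full_of_extension_diagram
    {B E₁ E₂ A₁ A₂ : Type*}
    [NonUnitalCStarAlgebra B] [NonUnitalCStarAlgebra E₁] [NonUnitalCStarAlgebra E₂]
    [NonUnitalCStarAlgebra A₁] [NonUnitalCStarAlgebra A₂]
    (ι₁ : B →⋆ₙₐ[ℂ] E₁) (ι₂ : B →⋆ₙₐ[ℂ] E₂)
    (π₁ : E₁ →⋆ₙₐ[ℂ] A₁) (π₂ : E₂ →⋆ₙₐ[ℂ] A₂)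
    (hι₁ : Function.Injective ι₁) (hι₂ : Function.Injective ι₂)
    (hπ₁ : Function.Surjective π₁) (hπ₂ : Function.Surjective π₂)
    (hexact₁ : Set.range ι₁ = {x : E₁ | π₁ x = 0})
    (hexact₂ : Set.range ι₂ = {x : E₂ | π₂ x = 0})
    (φ₁ : E₁ →⋆ₙₐ[ℂ] E₂) (φ₂ : A₁ →⋆ₙₐ[ℂ] A₂)
    (hcomm_ideal : ∀ b : B, φ₁ (ι₁ b) = ι₂ b)
    (hcomm_quot : ∀ x : E₁, π₂ (φ₁ x) = φ₂ (π₁ x))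
    (h_full : IsFullSubset (Set.range φ₂)) :
    IsFullSubset (Set.range φ₁) := by
  intro I hI hsub
  -- the kernel of `π₂` is contained in `I`
  have hker : ∀ x : E₂, π₂ x = 0 → x ∈ I := by
    intro x hx
    have hx' : x ∈ Set.range ι₂ := by rw [hexact₂]; exact hx
    obtain ⟨b, rfl⟩ := hx'
    rw [← hcomm_ideal b]
    exact hsub ⟨ι₁ b, rfl⟩
  -- the image of `I` under `π₂` as a two-sided ideal
  have hzero : (0 : A₂) ∈ π₂ '' I := ⟨0, I.zero_mem, map_zero π₂⟩
  have hadd : ∀ {x y : A₂}, x ∈ π₂ '' I → y ∈ π₂ '' I → x + y ∈ π₂ '' I := by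
    rintro x y ⟨a, ha, rfl⟩ ⟨b, hb, rfl⟩
    exact ⟨a + b, I.add_mem ha hb, map_add π₂ a b⟩
  have hneg : ∀ {x : A₂}, x ∈ π₂ '' I → -x ∈ π₂ '' I := by
    rintro x ⟨a, ha, rfl⟩
    exact ⟨-a, I.neg_mem ha, map_neg π₂ a⟩
  have hmulL : ∀ {x y : A₂}, y ∈ π₂ '' I → x * y ∈ π₂ '' I := by
    rintro x y ⟨a, ha, rfl⟩
    obtain ⟨e, rfl⟩ := hπ₂ x
    exact ⟨e * a, I.mul_mem_left e a ha, map_mul π₂ e a⟩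
  have hmulR : ∀ {x y : A₂}, x ∈ π₂ '' I → x * y ∈ π₂ '' I := by
    rintro x y ⟨a, ha, rfl⟩
    obtain ⟨e, rfl⟩ := hπ₂ y
    exact ⟨a * e, I.mul_mem_right a e ha, map_mul π₂ a e⟩
  set J : TwoSidedIdeal A₂ := TwoSidedIdeal.mk' (π₂ '' I) hzero hadd hneg hmulL hmulR with hJ
  have hmemJ : ∀ a : A₂, a ∈ J ↔ a ∈ π₂ '' I := fun a =>
    TwoSidedIdeal.mem_mk' _ hzero hadd hneg hmulL hmulR a
  -- saturation
  have hsat : π₂ ⁻¹' (π₂ '' (I : Set E₂)) = (I : Set E₂) := by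
    ext e
    constructor
    · rintro ⟨x, hx, hxe⟩
      have h0 : π₂ (e - x) = 0 := by rw [map_sub, hxe, sub_self]
      have := I.add_mem (hker _ h0) hx
      simpa using this
    · exact fun h => ⟨e, h, rfl⟩
  -- `π₂` is an open map
  have hcont : Continuous π₂ := map_continuous π₂
  have hopen : IsOpenMap π₂ := by
    let f : E₂ →L[ℂ] A₂ :=
      { toFun := π₂, map_add' := map_add π₂, map_smul' := map_smul π₂, cont := hcont }
    have hfc : ⇑f = ⇑π₂ := rfl
    have : IsOpenMap f := ContinuousLinearMap.isOpenMap f (hfc ▸ hπ₂)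
    rwa [hfc] at this
  -- `J` is closed
  have hJclosed : IsClosed (J : Set A₂) := by
    have hJset : (J : Set A₂) = π₂ '' I := Set.ext hmemJ
    rw [hJset, ← isOpen_compl_iff]
    have hcompl : (π₂ '' (I : Set E₂))ᶜ = π₂ '' ((I : Set E₂))ᶜ := by
      ext a
      constructor
      · intro ha
        obtain ⟨e, rfl⟩ := hπ₂ a
        exact ⟨e, fun he => ha ⟨e, he, rfl⟩, rfl⟩
      · rintro ⟨e, he, rfl⟩ hmem
        exact he (by rw [← hsat]; exact hmem)
    rw [hcompl]
    exact hopen _ hI.isOpen_compl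
  -- `range φ₂ ⊆ J`
  have hJsub : Set.range φ₂ ⊆ (J : Set A₂) := by
    rintro a ⟨a₁, rfl⟩
    obtain ⟨x, rfl⟩ := hπ₁ a₁
    exact (hmemJ _).mpr ⟨φ₁ x, hsub ⟨x, rfl⟩, hcomm_quot x⟩
  have hJtop : J = ⊤ := h_full J hJclosed hJsub
  -- conclude
  rw [eq_top_iff]
  intro e _
  have : π₂ e ∈ J := by rw [hJtop]; trivial
  have : π₂ e ∈ π₂ '' I := (hmemJ _).mp this
  have : e ∈ π₂ ⁻¹' (π₂ '' (I : Set E₂)) := this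
  rw [hsat] at this
  exact this
end

section
/- Let A be a C*-algebra and let I and J be closed two-sided ideals of A with I ∩ J = {0}. Let π_J : A → A/J, π_I : A → A/I denote the quotient maps, and let q_J : A/J → A/(I + J) and q_I : A/I → A/(I + J) denote the further quotient maps onto A modulo the ideal I + J. Then the map a ↦ (π_J(a), π_I(a)) is an injective star-preserving ring homomorphism from A whose range is exactly the pullback {(x, y) ∈ A/J × A/I : q_J(x) = q_I(y)}; in particular, A is (isomorphic to) the pullback of A/J and A/I along the quotient maps to A/(I + J). -/
/-- **A C*-algebra with two disjoint closed ideals is a pullback of the quotients.**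
Let `A` be a C*-algebra, `I, J` closed two-sided ideals with `I ∩ J = {0}`.
Denoting by `πJ : A → A/J`, `πI : A → A/I` the quotient maps and by
`qJ : A/J → A/(I+J)`, `qI : A/I → A/(I+J)` the further quotient maps
(characterized by surjectivity, their kernels, and the commutativity `qJ ∘ πJ = qI ∘ πI`),
the map `a ↦ (πJ a, πI a)` is an injective star ring homomorphism from `A` whose range is
exactly the pullback `{(x, y) : qJ x = qI y}`. -/
theorem cstarAlgebra_isPullback_of_disjoint_ideals
    {A QJ QI Q : Type*} [NonUnitalCStarAlgebra A] [NonUnitalCStarAlgebra QJ]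
    [NonUnitalCStarAlgebra QI] [NonUnitalCStarAlgebra Q]
    (I J : TwoSidedIdeal A)
    (hIclosed : IsClosed (I : Set A)) (hJclosed : IsClosed (J : Set A))
    (hdisj : ∀ a : A, a ∈ I → a ∈ J → a = 0)
    (πJ : A →⋆ₙₐ[ℂ] QJ) (πI : A →⋆ₙₐ[ℂ] QI)
    (hπJ : Function.Surjective πJ) (hπI : Function.Surjective πI)
    (hkerJ : ∀ a : A, πJ a = 0 ↔ a ∈ J) (hkerI : ∀ a : A, πI a = 0 ↔ a ∈ I)
    (qJ : QJ →⋆ₙₐ[ℂ] Q) (qI : QI →⋆ₙₐ[ℂ] Q)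
    (hqJ : Function.Surjective qJ) (hqI : Function.Surjective qI)
    (hcomm : ∀ a : A, qJ (πJ a) = qI (πI a))
    (hkerQ : ∀ a : A, qJ (πJ a) = 0 ↔ ∃ i ∈ I, ∃ j ∈ J, a = i + j) :
    Function.Injective (fun a : A => ((πJ a, πI a) : QJ × QI)) ∧
      Set.range (fun a : A => ((πJ a, πI a) : QJ × QI)) =
        {p : QJ × QI | qJ p.1 = qI p.2} := by
  constructor
  · intro a b hab
    have h1 : πJ a = πJ b := congrArg Prod.fst hab
    have h2 : πI a = πI b := congrArg Prod.snd hab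
    have hJ' : πJ (a - b) = 0 := by rw [map_sub, h1, sub_self]
    have hI' : πI (a - b) = 0 := by rw [map_sub, h2, sub_self]
    have := hdisj (a - b) ((hkerI _).mp hI') ((hkerJ _).mp hJ')
    exact sub_eq_zero.mp this
  · ext p
    constructor
    · rintro ⟨a, rfl⟩
      exact hcomm a
    · rintro hp
      obtain ⟨a, ha⟩ := hπJ p.1
      obtain ⟨b, hb⟩ := hπI p.2
      have h0 : qJ (πJ (a - b)) = 0 := by
        rw [map_sub, map_sub, ha, hcomm b, hb, hp, sub_self]
      obtain ⟨i, hi, j, hj, hij⟩ := (hkerQ _).mp h0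
      refine ⟨a - j, Prod.ext ?_ ?_⟩
      · simp only [map_sub, (hkerJ j).mpr hj, sub_zero, ha]
      · have heq : a - j = b + i := by
          calc a - j = (a - b) + b - j := by abel
            _ = (i + j) + b - j := by rw [hij]
            _ = b + i := by abel
        simp only [heq, map_add, (hkerI i).mpr hi, add_zero, hb]
end

section
/- Let α be a finite type and let R be a relation on α whose transitive closure is antisymmetric (i.e. if x and y are related both ways by the transitive closure of R, then x = y). Then R has a unique transitive reduction: there exists exactly one relation S on α such that the transitive closure of S equals the transitive closure of R, and S is minimal with this property, meaning that every relation T on α with T contained in S (∀ a b, T a b → S a b) whose transitive closure equals the transitive closure of R must equal S. -/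
/-!
The reduction is the covering relation of the closure `C = TransGen R`: the pairs `C a b` with no
third point strictly between them. Any `S` with `TransGen S = C` contains every covering pair,
since a chain of `S`-steps from `a` to `b` cannot pass through a point strictly between them.
Conversely, by antisymmetry a point `z` strictly between `a` and `b` cuts the interval `[a, b]`
into two strictly smaller intervals `[a, z]` and `[z, b]`, so on a finite type induction on the
size of the interval shows that the covering pairs generate `C`.
-/

namespace Relation

variable {α : Type*}

def coverRel (C : α → α → Prop) (a b : α) : Prop :=
  C a b ∧ ∀ z, C a z → C z b → z = a ∨ z = b

def interval (C : α → α → Prop) (a b : α) : Set α :=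
  {w | ReflGen C a w ∧ ReflGen C w b}

theorem coverRel_le (C : α → α → Prop) : coverRel C ≤ C := fun _ _ h => h.1

theorem coverRel_transGen_le (S : α → α → Prop) : coverRel (TransGen S) ≤ S := by
  intro a b hab
  induction hab.1 using TransGen.head_induction_on with
  | single hS => exact hS
  | @head a c hac hcb ih =>
    rcases hab.2 c (.single hac) hcb with rfl | rfl
    · exact ih hab
    · exact hac

variable {C : α → α → Prop}

theorem left_mem_interval {a b : α} (hab : ReflGen C a b) : a ∈ interval C a b :=
  ⟨.refl, hab⟩

theorem right_mem_interval {a b : α} (hab : ReflGen C a b) : b ∈ interval C a b :=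
  ⟨hab, .refl⟩

theorem interval_subset_interval [IsTrans α C] {a b x y : α} (hax : ReflGen C a x)
    (hyb : ReflGen C y b) : interval C x y ⊆ interval C a b :=
  fun _ ⟨hxw, hwy⟩ => ⟨_root_.trans hax hxw, _root_.trans hwy hyb⟩

theorem reflGen_eq_of_antisymm (hanti : ∀ x y, C x y → C y x → x = y) {a b : α}
    (hab : ReflGen C a b) (hba : C b a) : a = b := by
  cases hab with
  | refl => rfl
  | single hab => exact hanti a b hab hba

theorem transGen_coverRel_of_finite [IsTrans α C] [Finite α]
    (hanti : ∀ x y, C x y → C y x → x = y) {a b : α} (hab : C a b) :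
    TransGen (coverRel C) a b := by
  by_cases hcov : coverRel C a b
  · exact .single hcov
  obtain ⟨z, haz, hzb, hza, hzb'⟩ : ∃ z, C a z ∧ C z b ∧ z ≠ a ∧ z ≠ b := by
    simpa [coverRel, hab, not_or] using hcov
  exact (transGen_coverRel_of_finite hanti haz).trans (transGen_coverRel_of_finite hanti hzb)
termination_by (interval C a b).ncard
decreasing_by
  · refine Set.ncard_lt_ncard ((Set.ssubset_iff_of_subset
      (interval_subset_interval .refl (.single hzb))).2 ?_)
    exact ⟨b, right_mem_interval (.single hab),
      fun hb => hzb' (reflGen_eq_of_antisymm hanti hb.2 hzb).symm⟩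
  · refine Set.ncard_lt_ncard ((Set.ssubset_iff_of_subset
      (interval_subset_interval (.single haz) .refl)).2 ?_)
    exact ⟨a, left_mem_interval (.single hab),
      fun ha => hza (reflGen_eq_of_antisymm hanti ha.1 haz)⟩

theorem transGen_coverRel_eq_of_finite [IsTrans α C] [Finite α]
    (hanti : ∀ x y, C x y → C y x → x = y) : TransGen (coverRel C) = C :=
  le_antisymm ((TransGen.mono (coverRel_le C)).trans transGen_eq_self.le)
    fun _ _ => transGen_coverRel_of_finite hanti

end Relation

open Relation in
/-- **Unique transitive reduction.**
If `R` is a relation on a finite type whose transitive closure is antisymmetric, then `R`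
has a unique transitive reduction: there is exactly one relation `S` having the same
transitive closure as `R` and minimal (w.r.t. containment) among such relations. -/
theorem exists_unique_transitive_reduction {α : Type*} [Fintype α] (R : α → α → Prop)
    (h : ∀ x y : α, Relation.TransGen R x y → Relation.TransGen R y x → x = y) :
    ∃! S : α → α → Prop,
      Relation.TransGen S = Relation.TransGen R ∧
        ∀ T : α → α → Prop, (∀ a b, T a b → S a b) →
          Relation.TransGen T = Relation.TransGen R → T = S := by
  have hclosure : TransGen (coverRel (TransGen R)) = TransGen R :=
    transGen_coverRel_eq_of_finite h
  have hcover_le : ∀ S, TransGen S = TransGen R → coverRel (TransGen R) ≤ S :=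
    fun S hS => hS ▸ coverRel_transGen_le S
  refine ⟨coverRel (TransGen R),
    ⟨hclosure, fun T hT hTR => le_antisymm hT (hcover_le T hTR)⟩, ?_⟩
  rintro S ⟨hS, hS_min⟩
  exact (hS_min _ (hcover_le S hS) hclosure).symm
end
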